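/- Let V be a real vector space, let x₀, x_T, ε ∈ V, and let m_{t-1}, m_t, δ_{t-1}, δ_t ∈ ℝ with δ_t ≠ 0 and m_{t-1} ≠ 1. Define δ_{t|t-1} = δ_t - δ_{t-1}(1 - m_t)²/(1 - m_{t-1})², a = (δ_{t-1}/δ_t)·(1 - m_t)/(1 - m_{t-1}) + (δ_{t|t-1}/δ_t)·(1 - m_{t-1}), b = m_{t-1} - m_t·(1 - m_t)·δ_{t-1}/((1 - m_{t-1})·δ_t), c = (1 - m_{t-1})·δ_{t|t-1}/δ_t, and x_t = (1 - m_t)·x₀ + m_t·x_T + √δ_t·ε (with δ_t ≥ 0). Then a·x_t + b·x_T - c·(m_t·(x_T - x₀) + √δ_t·ε) = (1 - m_{t-1})·x₀ + m_{t-1}·x_T + ((δ_{t-1}/δ_t)·(1 - m_t)/(1 - m_{t-1}))·√δ_t·ε. -/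
import Mathlib


/-- **Consistency of the reverse transition mean (BBDM).** When the network's
prediction of the drift-plus-noise term `m_t(x_T - x₀) + √δ_t ε` is exact, the reverse
mean `a·x_t + b·x_T - c·(m_t(x_T - x₀) + √δ_t ε)` equals the bridge interpolation at
time `t-1` plus the correctly rescaled noise component of `x_t`. -/
theorem reverse_mean_consistency
    {V : Type*} [AddCommGroup V] [Module ℝ V]
    (x₀ xT ε : V) (mtm1 mt δtm1 δt : ℝ)
    (hδt : δt ≠ 0) (hmtm1 : mtm1 ≠ 1) (hδt_nonneg : 0 ≤ δt)
    (δcond a b c : ℝ)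
    (hδcond : δcond = δt - δtm1 * (1 - mt) ^ 2 / (1 - mtm1) ^ 2)
    (ha : a = δtm1 / δt * (1 - mt) / (1 - mtm1) + δcond / δt * (1 - mtm1))
    (hb : b = mtm1 - mt * (1 - mt) * δtm1 / ((1 - mtm1) * δt))
    (hc : c = (1 - mtm1) * δcond / δt)
    (xt : V) (hxt : xt = (1 - mt) • x₀ + mt • xT + Real.sqrt δt • ε) :
    a • xt + b • xT - c • (mt • (xT - x₀) + Real.sqrt δt • ε) =
      (1 - mtm1) • x₀ + mtm1 • xT +
        (δtm1 / δt * (1 - mt) / (1 - mtm1)) • (Real.sqrt δt • ε) := by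
  have h1 : (1:ℝ) - mtm1 ≠ 0 := sub_ne_zero.mpr (Ne.symm hmtm1)
  subst hδcond ha hb hc hxt
  match_scalars <;> field_simp <;> ring
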